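/- arXiv:1909.12819 — 5 statements merged into one kernel-verified Lean document; each statement's English description precedes it below -/
import Mathlib

section
/- Let C be a triangulated category with a t-structure t. For objects M, N in C_{t≤0} and a morphism f : M → N, the cone of f belongs to C_{t≤0} if and only if the induced morphism H_0^t(f) : H_0^t(M) → H_0^t(N) is a monomorphism in the heart of t. -/
open CategoryTheory CategoryTheory.Limits CategoryTheory.Pretriangulated Opposite

universe v u v₂ u₂

variable (C : Type u) [Category.{v} C] [HasZeroObject C] [HasShift C ℤ]
  [Preadditive C] [∀ (n : ℤ), (shiftFunctor C n).Additive] [Pretriangulated C]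

/-- The data of the heart of a t-structure `t` (given as an abelian category `A`
fully faithfully embedded in `C` with essential image the objects that are both `≤ 0`
and `≥ 0` for `t`) together with the zeroth t-homology functor `H : C ⥤ A`, which is
homological, restricts to the identity on the heart, and kills `C_{t ≥ 1}` and `C_{t ≤ -1}`.
(We use the homological convention of the paper: `C_{t ≤ n}` corresponds to `t.ge (-n)`
and `C_{t ≥ n}` corresponds to `t.le (-n)` in Mathlib's conventions.) -/
structure THomologyData (t : Triangulated.TStructure C)
    (A : Type u₂) [Category.{v₂} A] [Abelian A] where
  /-- the embedding of the heart -/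
  inc : A ⥤ C
  full : inc.Full
  faithful : inc.Faithful
  le_heart : ∀ X : A, t.le 0 (inc.obj X)
  ge_heart : ∀ X : A, t.ge 0 (inc.obj X)
  essSurj_heart : ∀ X : C, t.le 0 X → t.ge 0 X → ∃ Y : A, Nonempty (inc.obj Y ≅ X)
  /-- the zeroth t-homology functor -/
  H : C ⥤ A
  unit : inc ⋙ H ≅ 𝟭 A
  homological : ∀ (T : Triangle C), T ∈ (distTriang C) →
    ∃ (hz : H.map T.mor₁ ≫ H.map T.mor₂ = 0),
      (ShortComplex.mk (H.map T.mor₁) (H.map T.mor₂) hz).Exact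
  vanish_ge_one : ∀ X : C, t.ge 1 X → IsZero (H.obj X)
  vanish_le_neg_one : ∀ X : C, t.le (-1) X → IsZero (H.obj X)

/-!
The forward direction is exactness of `H(Z[-1]) → H(M) → H(N)`, whose first term vanishes.
Conversely, `Z` is an extension of `M[1]` by `N`, so `Z ∈ C_{t≤1}` and `W := Z[-1] ∈ C_{t≤0}`;
`H(W) → H(M)` is injective and its composite with the injection `H(f)` is zero, so `H(W) = 0`.
Finally an object `W ∈ C_{t≤0}` with `H(W) = 0` lies in `C_{t≤-1}`: the first term of its
truncation triangle `τ_{≥0} W → W → τ_{≤-1} W` lies in the heart and its `H` injects into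
`H(W) = 0`, so it vanishes.
-/

namespace THomologyData

variable {C} {t : Triangulated.TStructure C} {A : Type u₂} [Category.{v₂} A] [Abelian A]
  (d : THomologyData C t A)

lemma isZero_H_obj_shift_neg_one {X : C} (hX : t.ge 0 X) :
    IsZero (d.H.obj (X⟦(-1 : ℤ)⟧)) :=
  d.vanish_ge_one _ (t.ge_shift 0 (-1) 1 (by omega) X hX)

lemma mono_H_map_mor₁ (T : Triangle C) (hT : T ∈ distTriang C) (h₃ : t.ge 0 T.obj₃) :
    Mono (d.H.map T.mor₁) := by
  obtain ⟨_, hexact⟩ := d.homological _ (inv_rot_of_distTriang _ hT)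
  exact hexact.mono_g ((d.isZero_H_obj_shift_neg_one h₃).eq_of_src _ _)

lemma isZero_H_obj₁_of_mono (T : Triangle C) (hT : T ∈ distTriang C) (h₃ : t.ge 0 T.obj₃)
    (h₂ : Mono (d.H.map T.mor₂)) : IsZero (d.H.obj T.obj₁) := by
  obtain ⟨hzero, -⟩ := d.homological T hT
  have := d.mono_H_map_mor₁ T hT h₃
  exact IsZero.of_mono_eq_zero _ (zero_of_comp_mono _ hzero)

lemma isZero_of_heart_of_isZero_H {X : C} (hle : t.le 0 X) (hge : t.ge 0 X)
    (hH : IsZero (d.H.obj X)) : IsZero X := by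
  obtain ⟨Y, ⟨e⟩⟩ := d.essSurj_heart X hle hge
  have hY : IsZero Y := hH.of_iso ((d.unit.app Y).symm ≪≫ d.H.mapIso e)
  have := d.full
  exact (d.inc.map_isZero hY).of_iso e.symm

lemma ge_one_of_isZero_H {X : C} (hX : t.ge 0 X) (hH : IsZero (d.H.obj X)) :
    t.ge 1 X := by
  obtain ⟨X₀, Y₁, hX₀, hY₁, a, b, c, hT⟩ := t.exists_triangle X 0 1 rfl
  have : t.IsGE Y₁ 1 := ⟨hY₁⟩
  have : t.IsGE (Y₁⟦(-1 : ℤ)⟧) 2 := t.isGE_shift Y₁ 1 (-1) 2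
  have hX₀' : t.ge 0 X₀ :=
    (t.isGE₂ _ (inv_rot_of_distTriang _ hT) 0 (t.isGE_of_ge (Y₁⟦(-1 : ℤ)⟧) 0 2) ⟨hX⟩).ge
  have : Mono (d.H.map a) := d.mono_H_map_mor₁ _ hT (t.ge_one_le _ hY₁)
  have hX₀zero : IsZero X₀ := d.isZero_of_heart_of_isZero_H hX₀ hX₀'
    (IsZero.of_mono_eq_zero (d.H.map a) (hH.eq_of_tgt _ _))
  have : IsIso b := (Triangle.isZero₁_iff_isIso₂ _ hT).1 hX₀zero
  exact (t.ge 1).prop_of_iso (asIso b).symm hY₁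

end THomologyData

/-- For objects `M, N` in `C_{t ≤ 0}` and `f : M ⟶ N`, the cone of `f` belongs to
`C_{t ≤ 0}` if and only if `H_0^t f` is a monomorphism in the heart of `t`. -/
theorem cone_le_zero_iff_mono_homology
    (t : Triangulated.TStructure C) {A : Type u₂} [Category.{v₂} A] [Abelian A]
    (d : THomologyData C t A)
    (M N : C) (hM : t.ge 0 M) (hN : t.ge 0 N) (f : M ⟶ N)
    (Z : C) (g : N ⟶ Z) (h : Z ⟶ M⟦(1 : ℤ)⟧)
    (hT : Triangle.mk f g h ∈ distTriang C) :
    t.ge 0 Z ↔ Mono (d.H.map f) := by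
  refine ⟨d.mono_H_map_mor₁ _ hT, fun hf ↦ ?_⟩
  have hZ : t.IsGE Z (-1) := t.isGE₂ _ (rot_of_distTriang _ hT) (-1)
    ⟨t.ge_antitone (by omega) _ hN⟩ ⟨t.ge_shift 0 1 (-1) (by omega) M hM⟩
  have hHZ : IsZero (d.H.obj (Z⟦(-1 : ℤ)⟧)) :=
    d.isZero_H_obj₁_of_mono _ (inv_rot_of_distTriang _ hT) hN hf
  have : t.IsGE (Z⟦(-1 : ℤ)⟧) 1 := ⟨d.ge_one_of_isZero_H (t.isGE_shift Z (-1) (-1) 0).ge hHZ⟩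
  exact (t.isGE_of_shift Z 0 (-1) 1).ge
end

section
/- Let C be a triangulated category closed under small products, and t a t-structure on C such that the class C_{t≤0} is closed under products. Then for any family (A_i) of objects of the heart Ht, the product of the A_i in Ht exists and is isomorphic to H_0^t of the product of the A_i computed in C. -/
open CategoryTheory CategoryTheory.Limits CategoryTheory.Pretriangulated Opposite

universe v u v₂ u₂

variable (C : Type u) [Category.{v} C] [HasZeroObject C] [HasShift C ℤ]
  [Preadditive C] [∀ (n : ℤ), (shiftFunctor C n).Additive] [Pretriangulated C]

/-! Let `P = ∏ᶜ A_j`, computed in `C`; it is `≥ 0` by `hcl`. In the truncation triangle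
`τ_{≤0} P ⟶ P ⟶ τ_{>0} P ⟶ …` the third vertex is killed by `H` together with its shift by `-1`,
so `H (τ_{≤0} P) ⟶ H P` is an isomorphism, and `τ_{≤0} P` lies in the heart. Hence every morphism
`T ⟶ H P` from an object of the heart is `H` of a morphism `T ⟶ P`, i.e. of a family `T ⟶ A_j`;
since `H` is the identity on the heart, this is the universal property of `H P`. -/

namespace CategoryTheory.Triangulated.TStructure

variable {C}

lemma isGE_truncLE_obj (t : TStructure C) (X : C) (a b : ℤ) [t.IsGE X a] :
    t.IsGE ((t.truncLE b).obj X) a := by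
  by_cases hab : a ≤ b + 1
  · have : t.IsGE (((t.truncGT b).obj X)⟦(-1 : ℤ)⟧) a :=
      have := t.isGE_shift ((t.truncGT b).obj X) (b + 1) (-1) (b + 2)
      t.isGE_of_ge _ a (b + 2)
    exact t.isGE₂ _ (inv_rot_of_distTriang _ (t.triangleLEGT_distinguished b X)) a this
      (inferInstanceAs (t.IsGE X a))
  · have : t.IsGE X (b + 1) := t.isGE_of_ge X (b + 1) a
    exact t.isGE_of_isZero ((t.isGE_iff_isZero_truncLT_obj (b + 1) X).1 this) a

end CategoryTheory.Triangulated.TStructure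

namespace THomologyData

variable {C} {t : Triangulated.TStructure C} {A : Type u₂} [Category.{v₂} A] [Abelian A]
  (d : THomologyData C t A)

instance : d.inc.Full := d.full

instance : d.inc.Faithful := d.faithful

lemma isIso_map_mor₁ (T : Triangle C) (hT : T ∈ distTriang C) (h₃ : t.IsGE T.obj₃ 1) :
    IsIso (d.H.map T.mor₁) := by
  obtain ⟨_, hexact⟩ := d.homological _ hT
  obtain ⟨_, hexact'⟩ := d.homological _ (inv_rot_of_distTriang _ hT)
  have : t.IsGE T.invRotate.obj₁ 1 :=
    have := t.isGE_shift T.obj₃ 1 (-1) 2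
    t.isGE_of_ge (T.obj₃⟦(-1 : ℤ)⟧) 1 2
  have : Epi (d.H.map T.mor₁) :=
    hexact.epi_f ((d.vanish_ge_one _ (t.ge_of_isGE _ 1)).eq_of_tgt _ _)
  have : Mono (d.H.map T.mor₁) :=
    hexact'.mono_g ((d.vanish_ge_one _ (t.ge_of_isGE _ 1)).eq_of_src _ _)
  exact isIso_of_mono_of_epi _

lemma unit_inv_app_map_unit_hom_app {X Y : A} (f : d.inc.obj X ⟶ d.inc.obj Y) :
    d.unit.inv.app X ≫ d.H.map f ≫ d.unit.hom.app Y = d.inc.preimage f := by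
  have h := d.unit.inv.naturality (d.inc.preimage f)
  simp only [Functor.comp_map, Functor.map_preimage, Functor.id_map] at h
  simp [← reassoc_of% h]

lemma exists_eq_unit_inv_app_map_of_mem_heart {T : A} {Y : C} (hle : t.le 0 Y) (hge : t.ge 0 Y)
    (ψ : T ⟶ d.H.obj Y) : ∃ f : d.inc.obj T ⟶ Y, ψ = d.unit.inv.app T ≫ d.H.map f := by
  obtain ⟨Y', ⟨e⟩⟩ := d.essSurj_heart Y hle hge
  let g : T ⟶ Y' := ψ ≫ d.H.map e.inv ≫ d.unit.hom.app Y'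
  have hg : d.unit.inv.app T ≫ d.H.map (d.inc.map g) = g ≫ d.unit.inv.app Y' :=
    (d.unit.inv.naturality g).symm
  refine ⟨d.inc.map g ≫ e.hom, ?_⟩
  rw [Functor.map_comp, reassoc_of% hg]
  simp [g]

lemma exists_eq_unit_inv_app_map_of_isGE {T : A} {X : C} [t.IsGE X 0] (ψ : T ⟶ d.H.obj X) :
    ∃ f : d.inc.obj T ⟶ X, ψ = d.unit.inv.app T ≫ d.H.map f := by
  have : IsIso (d.H.map ((t.truncLEι 0).app X)) :=
    d.isIso_map_mor₁ ((t.triangleLEGT 0).obj X) (t.triangleLEGT_distinguished 0 X)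
      (inferInstanceAs (t.IsGE ((t.truncGT 0).obj X) (0 + 1)))
  obtain ⟨f, hf⟩ := d.exists_eq_unit_inv_app_map_of_mem_heart (t.le_of_isLE _ 0)
    (t.isGE_truncLE_obj X 0 0).ge (ψ ≫ inv (d.H.map ((t.truncLEι 0).app X)))
  refine ⟨f ≫ (t.truncLEι 0).app X, ?_⟩
  rw [Functor.map_comp, ← Category.assoc, ← hf]
  simp

end THomologyData

/-- If `C` has small products and `C_{t≤0}` (i.e. `t.GE 0` in Mathlib's conventions)
is closed under products, then for any family `(A_i)` of objects of the heart, the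
product of the `A_i` exists in the heart and is given by `H_0^t` applied to the product
of the `A_i` computed in `C` (together with the images of the projections). -/
theorem heart_product_eq_homology_product
    (t : Triangulated.TStructure C) {A : Type u₂} [Category.{v₂} A] [Abelian A]
    (d : THomologyData C t A) [HasProducts.{v} C]
    (hcl : ∀ {J : Type v} (g : J → C), (∀ j, t.ge 0 (g j)) → t.ge 0 (∏ᶜ g))
    {J : Type v} (As : J → A) :
    Nonempty (IsLimit (Fan.mk (d.H.obj (∏ᶜ fun j => d.inc.obj (As j)))
      (fun j => d.H.map (Pi.π (fun j => d.inc.obj (As j)) j) ≫ d.unit.hom.app (As j)))) := by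
  let P := ∏ᶜ fun j => d.inc.obj (As j)
  have : t.IsGE P 0 := ⟨hcl _ fun j => d.ge_heart (As j)⟩
  have proj_eq {T : A} (f : d.inc.obj T ⟶ P) (j : J) :
      (d.unit.inv.app T ≫ d.H.map f) ≫ d.H.map (Pi.π _ j) ≫ d.unit.hom.app (As j) =
        d.inc.preimage (f ≫ Pi.π _ j) := by
    simpa using d.unit_inv_app_map_unit_hom_app (f ≫ Pi.π _ j)
  refine ⟨Fan.IsLimit.mk _
    (fun s => d.unit.inv.app s.pt ≫ d.H.map (Pi.lift fun j => d.inc.map (s.proj j)))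
    (fun s j => ?_) (fun s m hm => ?_)⟩
  · simp [proj_eq]
  · obtain ⟨f, rfl⟩ := d.exists_eq_unit_inv_app_map_of_isGE m
    congr 2
    refine Pi.hom_ext _ _ fun j => ?_
    have hj := hm j
    rw [fan_mk_proj, proj_eq] at hj
    simpa using congr(d.inc.map $hj)
end

section
/- Let C be a triangulated category with coproducts and P a class of objects. If H' is a homological functor from C to an AB5 abelian category that preserves coproducts and vanishes on P, then H' vanishes on the strong extension-closure of P. In particular, if D is a class of compact objects with D ⊥ P, then D ⊥ (strong extension-closure of P). -/
open CategoryTheory CategoryTheory.Limits CategoryTheory.Pretriangulated Opposite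

universe v u v₂ u₂

variable (C : Type u) [Category.{v} C] [HasZeroObject C] [HasShift C ℤ]
  [Preadditive C] [∀ (n : ℤ), (shiftFunctor C n).Additive] [Pretriangulated C]


/-- The morphism `1 - shift : ⨁ Y_i ⟶ ⨁ Y_i` whose `i`-th component is
`ι_i - f_i ≫ ι_{i+1}`; a homotopy colimit of the sequence `(Y_i, f_i)` is by
definition a cone of this morphism. -/
noncomputable def hocolimMap [HasCountableCoproducts C]
    (Y : ℕ → C) (f : ∀ i, Y i ⟶ Y (i + 1)) : (∐ Y) ⟶ (∐ Y) :=
  Sigma.desc fun i => Sigma.ι Y i - f i ≫ Sigma.ι Y (i + 1)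

/-- The strong extension-closure of a class `P` of objects: the smallest class
containing `P` which contains all zero objects, is closed under retracts, under
small coproducts, and under homotopy colimits of sequences whose first term and
all cones of connecting morphisms lie in the class (i.e. is strongly extension-closed). -/
def strongExtClosure [HasCoproducts.{v} C] [HasCountableCoproducts C] (P : Set C) : Set C :=
  {X | ∀ Q : Set C, P ⊆ Q →
    (∀ Z : C, IsZero Z → Z ∈ Q) →
    (∀ (X' Y' : C) (i : X' ⟶ Y') (p : Y' ⟶ X'), i ≫ p = 𝟙 X' → Y' ∈ Q → X' ∈ Q) →
    (∀ {J : Type v} (g : J → C), (∀ j, g j ∈ Q) → (∐ g) ∈ Q) →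
    (∀ (Y : ℕ → C) (f : ∀ i, Y i ⟶ Y (i + 1)), Y 0 ∈ Q →
      (∀ (i : ℕ) (Zc : C) (u : Y (i + 1) ⟶ Zc) (w : Zc ⟶ (Y i)⟦(1 : ℤ)⟧),
        Triangle.mk (f i) u w ∈ (distTriang C) → Zc ∈ Q) →
      ∀ (W : C) (u : (∐ Y) ⟶ W) (w : W ⟶ (∐ Y)⟦(1 : ℤ)⟧),
        Triangle.mk (hocolimMap C Y f) u w ∈ (distTriang C) → W ∈ Q) →
    X ∈ Q}

/-- An object `X` is compact if `Hom(X, -)` (as an `AddCommGrp`-valued functor)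
preserves small coproducts. -/
def IsCompactObj (X : C) : Prop :=
  ∀ (J : Type v), PreservesColimitsOfShape (Discrete J) (preadditiveCoyoneda.obj (op X))

/-!
The objects killed by `H` contain `P` and the zero objects and are closed under retracts and
coproducts, as `H` preserves them. If `W` is a homotopy colimit of a sequence `Y` of such
objects, the long exact sequence of `∐ Y ⟶ ∐ Y ⟶ W ⟶ (∐ Y)⟦1⟧` reduces `H W = 0` to the
injectivity of `H` of `(1 - shift)⟦1⟧`, which is `1 - shift` on the coproduct `∐ H (Y i⟦1⟧)`.
In an AB5 category `1 - shift` on `∐ B i` is a monomorphism: it is the colimit of its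
restrictions `⨁_{i ≤ n} B i ⟶ ⨁_{i ≤ n+1} B i`, which are split monomorphisms, and filtered
colimits preserve monomorphisms. For a compact object `X`, `Hom(X, -)` is such a functor `H`.
-/

namespace PartialSums

variable {A : Type*} [Category A] [Preadditive A] [HasFiniteBiproducts A]

noncomputable abbrev partialSums (B : ℕ → A) : ℕ ⥤ A where
  obj n := ⨁ fun i : Fin (n + 1) => B i
  map {n m} f := biproduct.desc fun i =>
    biproduct.ι (fun k : Fin (m + 1) => B k) (Fin.castLE (Nat.succ_le_succ (leOfHom f)) i)
  map_id n := biproduct.hom_ext' _ _ fun i => by simp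
  map_comp f g := biproduct.hom_ext' _ _ fun i => by
    simp only [biproduct.ι_desc, biproduct.ι_desc_assoc]
    rfl

variable {B : ℕ → A}

lemma ι_comp_ι_app_of_le (t : Cocone (partialSums B)) {j n : ℕ} (h : j ≤ n) :
    biproduct.ι (fun i : Fin (n + 1) => B i) ⟨j, by omega⟩ ≫ t.ι.app n =
      biproduct.ι (fun i : Fin (j + 1) => B i) (Fin.last j) ≫ t.ι.app j := by
  rw [← t.w (homOfLE h), biproduct.ι_desc_assoc]
  rfl

section Cocone

variable {X : A} (ι : ∀ i, B i ⟶ X)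

noncomputable def cocone : Cocone (partialSums B) where
  pt := X
  ι.app n := biproduct.desc fun i => ι i
  ι.naturality n m f := biproduct.hom_ext' _ _ fun i => by simp

noncomputable def isColimitCocone (hc : IsColimit (Cofan.mk X ι)) : IsColimit (cocone ι) where
  desc t := hc.desc (Cofan.mk t.pt fun i =>
    biproduct.ι (fun k : Fin (i + 1) => B k) (Fin.last i) ≫ t.ι.app i)
  fac t n := biproduct.hom_ext' _ _ fun j => by
    simp only [cocone, biproduct.ι_desc_assoc]
    exact (hc.fac _ ⟨j⟩).trans (ι_comp_ι_app_of_le t (Nat.le_of_lt_succ j.isLt)).symm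
  uniq t m hm := hc.hom_ext fun ⟨i⟩ => by
    rw [hc.fac]
    exact (biproduct.ι_desc_assoc (fun k : Fin (i + 1) => ι k) (Fin.last i) m).symm.trans
      (congrArg _ (hm i))

end Cocone

abbrev succFunctor : ℕ ⥤ ℕ where
  obj n := n + 1
  map f := homOfLE (Nat.succ_le_succ (leOfHom f))

instance : succFunctor.Final :=
  (Monotone.final_functor_iff (f := (· + 1)) fun _ _ => Nat.succ_le_succ).2
    fun n => ⟨n, Nat.le_succ n⟩

variable (s : ∀ i, B i ⟶ B (i + 1))

noncomputable def idSubShift (n : ℕ) : (partialSums B).obj n ⟶ (partialSums B).obj (n + 1) :=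
  biproduct.desc fun i => biproduct.ι (fun k : Fin (n + 2) => B k) ⟨i, by omega⟩ -
    s i ≫ biproduct.ι (fun k : Fin (n + 2) => B k) ⟨i + 1, by omega⟩

/-- `telescope s n j = ∑_{j ≤ k ≤ n} (s (k - 1) ∘ ⋯ ∘ s j)` into the `k`-th summand; these
are the components of a retraction of `idSubShift s n`. -/
noncomputable def telescope (n j : ℕ) : B j ⟶ (partialSums B).obj n :=
  if h : j ≤ n then
    biproduct.ι (fun k : Fin (n + 1) => B k) ⟨j, by omega⟩ + s j ≫ telescope n (j + 1)
  else 0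
termination_by n + 1 - j

lemma telescope_of_le {n j : ℕ} (h : j ≤ n) :
    telescope s n j = biproduct.ι (fun k : Fin (n + 1) => B k) ⟨j, by omega⟩ +
      s j ≫ telescope s n (j + 1) := by
  rw [telescope, dif_pos h]

lemma idSubShift_comp_desc_telescope (n : ℕ) :
    idSubShift s n ≫ biproduct.desc (fun j : Fin (n + 2) => telescope s n j) = 𝟙 _ :=
  biproduct.hom_ext' _ _ fun i => by
    simp [idSubShift, telescope_of_le s (Nat.le_of_lt_succ i.isLt)]

instance (n : ℕ) : IsSplitMono (idSubShift s n) :=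
  .mk' ⟨_, idSubShift_comp_desc_telescope s n⟩

noncomputable def idSubShiftNatTrans : partialSums B ⟶ succFunctor ⋙ partialSums B where
  app := idSubShift s
  naturality n m f := biproduct.hom_ext' _ _ fun i => by simp [idSubShift]

instance : Mono (idSubShiftNatTrans s) :=
  have (n : ℕ) : Mono ((idSubShiftNatTrans s).app n) := inferInstanceAs (Mono (idSubShift s n))
  NatTrans.mono_of_mono_app _

lemma cocone_ι_app_comp {X : A} (ι : ∀ i, B i ⟶ X) {φ : X ⟶ X}
    (hφ : ∀ i, ι i ≫ φ = ι i - s i ≫ ι (i + 1)) (n : ℕ) :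
    (cocone ι).ι.app n ≫ φ = idSubShift s n ≫ (cocone ι).ι.app (n + 1) :=
  biproduct.hom_ext' _ _ fun i => by simp [cocone, idSubShift, hφ]

end PartialSums

open PartialSums in
theorem mono_of_isColimit_cofan_of_ι_comp_eq_sub {A : Type*} [Category A] [Preadditive A]
    [HasFiniteBiproducts A] [HasColimitsOfShape ℕ A] [(colim : (ℕ ⥤ A) ⥤ A).PreservesMonomorphisms]
    {B : ℕ → A} (s : ∀ i, B i ⟶ B (i + 1)) {X : A} {ι : ∀ i, B i ⟶ X}
    (hc : IsColimit (Cofan.mk X ι)) {φ : X ⟶ X} (hφ : ∀ i, ι i ≫ φ = ι i - s i ≫ ι (i + 1)) :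
    Mono φ :=
  colim.map_mono' (idSubShiftNatTrans s) (isColimitCocone ι hc)
    ((Functor.Final.isColimitWhiskerEquiv succFunctor _).symm (isColimitCocone ι hc)) φ
    (cocone_ι_app_comp s ι hφ)

lemma isZero_obj_sigmaObj {C D J : Type*} [Category C] [Category D] [HasZeroMorphisms D]
    [HasZeroObject D] (H : C ⥤ D) (g : J → C) [HasCoproduct g]
    [PreservesColimit (Discrete.functor g) H] (hg : ∀ j, IsZero (H.obj (g j))) :
    IsZero (H.obj (∐ g)) :=
  (isColimitOfHasCoproductOfPreservesColimit H g).isZero_pt (Functor.isZero _ fun ⟨j⟩ => hg j)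

section

variable {C}

open ZeroObject

lemma isHomological_of_exact {A : Type u₂} [Category.{v₂} A] [Abelian A] (H : C ⥤ A)
    (hH : ∀ T ∈ distTriang C, ∃ (hz : H.map T.mor₁ ≫ H.map T.mor₂ = 0),
      (ShortComplex.mk (H.map T.mor₁) (H.map T.mor₂) hz).Exact) :
    H.IsHomological := by
  have hzero : IsZero (H.obj 0) := by
    -- on the contractible triangle of `0` both maps are `𝟙 0`, so `𝟙 (H.obj 0) = 𝟙 ≫ 𝟙 = 0`
    obtain ⟨hz, -⟩ := hH _ (contractible_distinguished (0 : C))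
    have h : (0 : (0 : C) ⟶ 0) = 𝟙 0 := (isZero_zero C).eq_of_src _ _
    rw [IsZero.iff_id_eq_zero, ← H.map_id, ← Category.comp_id (𝟙 0), H.map_comp]
    nth_rw 2 [← h]
    exact hz
  have := Functor.preservesZeroMorphisms_of_map_zero_object hzero.isoZero
  exact ⟨fun T hT => (hH T hT).2⟩

variable {A : Type u₂} [Category.{v₂} A] [Abelian A] (H : C ⥤ A) [H.IsHomological]

attribute [local instance] Abelian.hasFiniteBiproducts

lemma isZero_obj_of_hocolim [HasCountableCoproducts C] [PreservesColimitsOfShape (Discrete ℕ) H]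
    [HasColimitsOfShape ℕ A] [(colim : (ℕ ⥤ A) ⥤ A).PreservesMonomorphisms]
    {Y : ℕ → C} (f : ∀ i, Y i ⟶ Y (i + 1)) (hY : ∀ i, IsZero (H.obj (Y i)))
    {W : C} {u : ∐ Y ⟶ W} {w : W ⟶ (∐ Y)⟦(1 : ℤ)⟧}
    (hT : Triangle.mk (hocolimMap C Y f) u w ∈ distTriang C) : IsZero (H.obj W) := by
  have hmono : Mono (H.map ((hocolimMap C Y f)⟦(1 : ℤ)⟧')) :=
    mono_of_isColimit_cofan_of_ι_comp_eq_sub (fun i => H.map ((f i)⟦(1 : ℤ)⟧'))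
      (isColimitOfHasCoproductOfPreservesColimit (shiftFunctor C (1 : ℤ) ⋙ H) Y) fun i => by
        simp [← Functor.map_comp, hocolimMap]
  have hw : H.map w = 0 := by
    have hcomp : w ≫ (hocolimMap C Y f)⟦(1 : ℤ)⟧' = 0 := comp_distTriang_mor_zero₃₁ _ hT
    rw [← cancel_mono (H.map ((hocolimMap C Y f)⟦(1 : ℤ)⟧')), zero_comp, ← H.map_comp, hcomp,
      H.map_zero]
  exact (H.map_distinguished_exact _ (rot_of_distTriang _ hT)).isZero_of_both_zeros
    ((isZero_obj_sigmaObj H Y hY).eq_of_src _ _) hw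

theorem isZero_obj_of_mem_strongExtClosure [HasCoproducts.{v} C] [HasCountableCoproducts C]
    [HasFilteredColimits A] [AB5 A] (hcc : ∀ J : Type v, PreservesColimitsOfShape (Discrete J) H)
    (P : Set C) (hP : ∀ X ∈ P, IsZero (H.obj X)) {X : C} (hX : X ∈ strongExtClosure C P) :
    IsZero (H.obj X) := by
  have : HasFilteredColimitsOfSize.{0, 0} A := hasFilteredColimitsOfSize_of_univLE.{0, 0, v₂, v₂}
  have : AB5OfSize.{0, 0} A := AB5OfSize_of_univLE.{0, 0, v₂, v₂} A
  have : PreservesColimitsOfShape (Discrete ℕ) H :=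
    have := hcc (ULift ℕ)
    preservesColimitsOfShape_of_equiv (Discrete.equivalence Equiv.ulift) H
  refine hX {Z | IsZero (H.obj Z)} hP (fun Z hZ => H.map_isZero hZ) ?retract ?sigma ?hocolim
  case retract =>
    intro X' Y' i p hip hY
    have : IsSplitMono i := .mk' ⟨p, hip⟩
    exact IsZero.of_mono (H.map i) hY
  case sigma =>
    intro J g hg
    have := hcc J
    exact isZero_obj_sigmaObj H g hg
  case hocolim =>
    intro Y f hY0 hcone W u w hT
    refine isZero_obj_of_hocolim H f (fun i => ?_) hT
    induction i with
    | zero => exact hY0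
    | succ i ih =>
      obtain ⟨Z, g, h, hZ⟩ := distinguished_cocone_triangle (f i)
      exact (H.map_distinguished_exact _ hZ).isZero_of_both_zeros (ih.eq_of_src _ _)
        ((hcone i Z g h hZ).eq_of_tgt _ _)

theorem eq_zero_of_isCompactObj_of_mem_strongExtClosure [HasCoproducts.{v} C]
    [HasCountableCoproducts C] (P : Set C) {X : C} (hX : IsCompactObj C X)
    (hXP : ∀ Y ∈ P, ∀ f : X ⟶ Y, f = 0) {Y : C} (hY : Y ∈ strongExtClosure C P) (f : X ⟶ Y) :
    f = 0 := by
  have hzero := isZero_obj_of_mem_strongExtClosure (preadditiveCoyoneda.obj (op X)) hX P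
    (fun Z hZ => @AddCommGrpCat.isZero_of_subsingleton _
      ⟨fun a b => (hXP Z hZ a).trans (hXP Z hZ b).symm⟩) hY
  exact (AddCommGrpCat.isZero_iff_subsingleton.mp hzero).elim f 0

end

/-- If `H'` is a homological functor from `C` to an AB5 abelian category preserving
coproducts and vanishing on `P`, then `H'` vanishes on the strong extension-closure
of `P`. In particular, if `D` is a class of compact objects with `D ⊥ P`, then
`D ⊥ (strong extension-closure of P)`. -/
theorem vanish_on_strongExtClosure_of_cc
    [HasCoproducts.{v} C] [HasCountableCoproducts C]
    {A : Type u₂} [Category.{v₂} A] [Abelian A] [HasFilteredColimits A] [AB5 A]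
    (P : Set C) (H' : C ⥤ A)
    (hH : ∀ (T : Triangle C), T ∈ (distTriang C) →
      ∃ (hz : H'.map T.mor₁ ≫ H'.map T.mor₂ = 0),
        (ShortComplex.mk (H'.map T.mor₁) (H'.map T.mor₂) hz).Exact)
    (hcc : ∀ (J : Type v), PreservesColimitsOfShape (Discrete J) H')
    (hvanish : ∀ X ∈ P, IsZero (H'.obj X)) :
    (∀ X ∈ strongExtClosure C P, IsZero (H'.obj X)) ∧
    (∀ D : Set C, (∀ X ∈ D, IsCompactObj C X) →
      (∀ X ∈ D, ∀ Y ∈ P, ∀ f : X ⟶ Y, f = 0) →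
      ∀ X ∈ D, ∀ Y ∈ strongExtClosure C P, ∀ f : X ⟶ Y, f = 0) := by
  have := isHomological_of_exact H' hH
  exact ⟨fun X hX => isZero_obj_of_mem_strongExtClosure H' hcc P hvanish hX,
    fun D hD hDP X hX Y hY f =>
      eq_zero_of_isCompactObj_of_mem_strongExtClosure P (hD X hX) (hDP X hX) hY f⟩
end

section
/- Let C be a triangulated category, and L, R classes of objects with L ⊥ R such that every object M of C fits in a distinguished triangle l → M → r → l[1] with l ∈ L, r ∈ R. Then the pair (kar(L), kar(R)), where kar(D) denotes the class of all retracts of elements of D in C, is a torsion theory on C. -/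
/-! Orthogonality passes to retracts, since a map between retracts factors through the objects
they are retracts of. Conversely, if `Y` is right orthogonal to `L`, the first map of its
decomposition triangle `l ⟶ Y ⟶ r ⟶ l⟦1⟧` vanishes, so `Y ⟶ r` is a split monomorphism and `Y`
is a retract of `r ∈ R`; dually for objects left orthogonal to `R`. -/

open CategoryTheory CategoryTheory.Limits CategoryTheory.Pretriangulated Opposite

universe v u v₂ u₂

variable (C : Type u) [Category.{v} C] [HasZeroObject C] [HasShift C ℤ]
  [Preadditive C] [∀ (n : ℤ), (shiftFunctor C n).Additive] [Pretriangulated C]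


/-- A torsion theory on a pretriangulated category `D`: a pair of classes `(L, R)` of
objects with `L^⊥ = R`, `L = ^⊥R`, and such that every object `M` fits into a
distinguished triangle `L_M ⟶ M ⟶ R_M ⟶ L_M⟦1⟧` with `L_M ∈ L` and `R_M ∈ R`
(an `s`-decomposition of `M`). -/
structure TorsionTheory (D : Type u₂) [Category.{v₂} D] [HasZeroObject D]
    [HasShift D ℤ] [Preadditive D] [∀ (n : ℤ), (shiftFunctor D n).Additive]
    [Pretriangulated D] where
  /-- the "torsion" class -/
  L : Set D
  /-- the "torsion-free" class -/
  R : Set D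
  mem_R_iff : ∀ Y : D, Y ∈ R ↔ ∀ X ∈ L, ∀ f : X ⟶ Y, f = 0
  mem_L_iff : ∀ X : D, X ∈ L ↔ ∀ Y ∈ R, ∀ f : X ⟶ Y, f = 0
  decomposition : ∀ M : D, ∃ (LM RM : D) (a : LM ⟶ M) (n : M ⟶ RM) (d : RM ⟶ LM⟦(1 : ℤ)⟧),
    LM ∈ L ∧ RM ∈ R ∧ Triangle.mk a n d ∈ distTriang D


namespace CategoryTheory

section
variable {A : Type*} [Category A]

lemma Retract.eq_zero_of_forall_eq_zero [HasZeroMorphisms A] {X X' Y Y' : A}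
    (hX : Retract X X') (hY : Retract Y Y') (h : ∀ g : X' ⟶ Y', g = 0) (f : X ⟶ Y) : f = 0 := by
  calc f = hX.i ≫ (hX.r ≫ f ≫ hY.i) ≫ hY.r := by simp [hX.retract_assoc, hY.retract]
    _ = 0 := by rw [h (hX.r ≫ f ≫ hY.i), zero_comp, comp_zero]

lemma ObjectProperty.retractClosure_eq_zero [HasZeroMorphisms A] {P Q : ObjectProperty A}
    (h : ∀ X', P X' → ∀ Y', Q Y' → ∀ g : X' ⟶ Y', g = 0)
    {X Y : A} (hX : P.retractClosure X) (hY : Q.retractClosure Y) (f : X ⟶ Y) : f = 0 := by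
  obtain ⟨X', hX', ⟨rX⟩⟩ := hX
  obtain ⟨Y', hY', ⟨rY⟩⟩ := hY
  exact rX.eq_zero_of_forall_eq_zero rY (h X' hX' Y' hY') f

lemma ObjectProperty.setOf_retractClosure (S : Set A) :
    {X | retractClosure (· ∈ S) X} =
      {X : A | ∃ Y ∈ S, ∃ (i : X ⟶ Y) (p : Y ⟶ X), i ≫ p = 𝟙 X} := by
  ext X
  constructor
  · rintro ⟨Y, hY, ⟨e⟩⟩
    exact ⟨Y, hY, e.i, e.r, e.retract⟩
  · rintro ⟨Y, hY, i, p, h⟩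
    exact ⟨Y, hY, ⟨⟨i, p, h⟩⟩⟩

end

section
variable {C}

lemma Pretriangulated.nonempty_retract_obj₃_of_mor₁_eq_zero (T : Triangle C)
    (hT : T ∈ distTriang C) (h : T.mor₁ = 0) : Nonempty (Retract T.obj₂ T.obj₃) := by
  obtain ⟨p, hp⟩ := T.yoneda_exact₂ hT (𝟙 T.obj₂) (by simp [h])
  exact ⟨⟨T.mor₂, p, hp.symm⟩⟩

lemma Pretriangulated.nonempty_retract_obj₁_of_mor₂_eq_zero (T : Triangle C)
    (hT : T ∈ distTriang C) (h : T.mor₂ = 0) : Nonempty (Retract T.obj₂ T.obj₁) := by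
  obtain ⟨i, hi⟩ := T.coyoneda_exact₂ hT (𝟙 T.obj₂) (by simp [h])
  exact ⟨⟨i, T.mor₁, hi.symm⟩⟩

end

end CategoryTheory

section
variable {C}

def TorsionTheory.ofDecomposition (L R : Set C) (horth : ∀ X ∈ L, ∀ Y ∈ R, ∀ f : X ⟶ Y, f = 0)
    (hdec : ∀ M : C, ∃ (l r : C) (a : l ⟶ M) (n : M ⟶ r) (d : r ⟶ l⟦(1 : ℤ)⟧),
      l ∈ L ∧ r ∈ R ∧ Triangle.mk a n d ∈ distTriang C) : TorsionTheory C where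
  L := {X | ObjectProperty.retractClosure (· ∈ L) X}
  R := {X | ObjectProperty.retractClosure (· ∈ R) X}
  mem_R_iff Y := by
    refine ⟨fun hY X hX f => ObjectProperty.retractClosure_eq_zero horth hX hY f, fun h => ?_⟩
    obtain ⟨l, r, a, n, d, hl, hr, hT⟩ := hdec Y
    have ha : a = 0 := h l (ObjectProperty.le_retractClosure _ _ hl) a
    exact ⟨r, hr, nonempty_retract_obj₃_of_mor₁_eq_zero _ hT ha⟩
  mem_L_iff X := by
    refine ⟨fun hX Y hY f => ObjectProperty.retractClosure_eq_zero horth hX hY f, fun h => ?_⟩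
    obtain ⟨l, r, a, n, d, hl, hr, hT⟩ := hdec X
    have hn : n = 0 := h r (ObjectProperty.le_retractClosure _ _ hr) n
    exact ⟨l, hl, nonempty_retract_obj₁_of_mor₂_eq_zero _ hT hn⟩
  decomposition M := by
    obtain ⟨l, r, a, n, d, hl, hr, hT⟩ := hdec M
    exact ⟨l, r, a, n, d, ObjectProperty.le_retractClosure _ _ hl,
      ObjectProperty.le_retractClosure _ _ hr, hT⟩

end

/-- If `L ⊥ R` and every object admits a decomposition triangle with first term in `L`
and third term in `R`, then the pair of retract-closures `(kar L, kar R)` is a torsion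
theory on `C`. -/
theorem karoubi_closures_torsionTheory (L R : Set C)
    (horth : ∀ X ∈ L, ∀ Y ∈ R, ∀ f : X ⟶ Y, f = 0)
    (hdec : ∀ M : C, ∃ (l r : C) (a : l ⟶ M) (n : M ⟶ r) (d : r ⟶ l⟦(1 : ℤ)⟧),
      l ∈ L ∧ r ∈ R ∧ Triangle.mk a n d ∈ distTriang C) :
    ∃ s : TorsionTheory C,
      s.L = {X : C | ∃ Y ∈ L, ∃ (i : X ⟶ Y) (p : Y ⟶ X), i ≫ p = 𝟙 X} ∧
      s.R = {X : C | ∃ Y ∈ R, ∃ (i : X ⟶ Y) (p : Y ⟶ X), i ≫ p = 𝟙 X} :=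
  ⟨.ofDecomposition L R horth hdec, ObjectProperty.setOf_retractClosure L,
    ObjectProperty.setOf_retractClosure R⟩
end

section
/- Let C be a triangulated category with coproducts, P a nonzero compact object of C, and suppose the Brown–Comenetz dual P̂ (representing M ↦ Hom_Ab(Hom_C(P,M), ℚ/ℤ)) exists. Then P̂ is not compact in C^op; i.e., the functor Hom_C(−, P̂) does not send all small products in C to coproducts of abelian groups. -/
open CategoryTheory CategoryTheory.Limits CategoryTheory.Pretriangulated Opposite

universe v u v₂ u₂

variable (C : Type u) [Category.{v} C] [HasZeroObject C] [HasShift C ℤ]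
  [Preadditive C] [∀ (n : ℤ), (shiftFunctor C n).Additive] [Pretriangulated C]


/-- The Brown–Comenetz functor of an object `P`:
`M ↦ Hom_Ab(Hom_C(P, M), ℚ/ℤ) : Cᵒᵖ ⥤ Ab`, where `ℚ/ℤ` is realized as
`AddCircle (1 : ℚ)` (lifted to the appropriate universe). An object representing
this functor is called the Brown–Comenetz dual of `P`. -/
noncomputable def BCfunctor (P : C) : Cᵒᵖ ⥤ AddCommGrpCat.{v} :=
  (preadditiveCoyoneda.obj (op P)).op ⋙
    preadditiveYoneda.obj (AddCommGrpCat.of (ULift.{v} (AddCircle (1 : ℚ))))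

/-!
If `P̂` were compact in `Cᵒᵖ`, then `Hom(Hom(P, ∏ₙ P), ℚ/ℤ)` would be the coproduct of the groups
`Hom(Hom(P, P), ℚ/ℤ)`, so every character of `Hom(P, ∏ₙ P)` would factor through finitely many
projections and hence vanish on the morphism `P ⟶ ∏ₙ P` with components `0, …, 0, 𝟙, 𝟙, …` once
its first `𝟙` is far enough out. But since `𝟙 P ≠ 0`, the germ at infinity of the constant
sequence `𝟙 P` is nonzero, and a character of the germs that detects it vanishes on none of
these morphisms.
-/

open Filter

lemma exists_addCircle_hom_ne_zero_of_eventuallyEq_const {ι A : Type*} [AddCommGroup A]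
    (l : Filter ι) [l.NeBot] {a : A} (ha : a ≠ 0) :
    ∃ χ : (ι → A) →+ AddCircle (1 : ℚ), ∀ x, x =ᶠ[l] (fun _ => a) → χ x ≠ 0 := by
  obtain ⟨χ, hχ⟩ :=
    CharacterModule.exists_character_apply_ne_zero_of_ne_zero (a := (a : Germ l A))
      (Germ.const_inj.not.2 ha)
  refine ⟨(χ : Germ l A →+ AddCircle (1 : ℚ)).comp (Germ.coeAddHom l), fun x hx => ?_⟩
  show χ (x : Germ l A) ≠ 0
  rwa [Germ.coe_eq.2 hx]

section

variable {D : Type u₂} [Category.{v₂} D] [Preadditive D] [HasProducts.{v₂} D]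

noncomputable def tailDiagonal (P : D) (n : ℕ) : P ⟶ ∏ᶜ fun _ : ULift.{v₂} ℕ => P :=
  Pi.lift fun i => if n ≤ i.down then 𝟙 P else 0

@[simp]
lemma tailDiagonal_π (P : D) (n : ℕ) (i : ULift.{v₂} ℕ) :
    tailDiagonal P n ≫ Pi.π _ i = if n ≤ i.down then 𝟙 P else 0 :=
  Pi.lift_π _ _

lemma eventually_apply_tailDiagonal_eq_zero (P : D) (A : AddCommGrpCat.{v₂})
    [PreservesColimitsOfShape (Discrete (ULift.{v₂} ℕ))
      ((preadditiveCoyoneda.obj (op P)).op ⋙ preadditiveYoneda.obj A)]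
    (φ : (P ⟶ ∏ᶜ fun _ : ULift.{v₂} ℕ => P) →+ A) :
    ∀ᶠ n in atTop, φ (tailDiagonal P n) = 0 := by
  set F := (preadditiveCoyoneda.obj (op P)).op ⋙ preadditiveYoneda.obj A
  have hc := isColimitOfPreserves F (Fan.IsLimit.op (productIsProduct fun _ : ULift.{v₂} ℕ => P))
  let germAtTailDiagonal : F.obj (op (∏ᶜ fun _ : ULift.{v₂} ℕ => P)) →+ Germ atTop A :=
    (Germ.coeAddHom atTop).comp
      ((AddMonoidHom.pi fun n => AddMonoidHom.eval (tailDiagonal P n)).comp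
        AddCommGrpCat.homAddEquiv.toAddMonoidHom)
  have hzero : AddCommGrpCat.ofHom germAtTailDiagonal = 0 := by
    refine hc.hom_ext fun ⟨i⟩ => ?_
    ext ψ
    -- the `i`-th injection is precomposition with `Pi.π _ i`, which kills `tailDiagonal P n`, `n > i`
    show (Germ.ofFun fun n => ψ.hom (tailDiagonal P n ≫ Pi.π _ i) : Germ atTop A) = 0
    refine Germ.coe_eq.2 ((eventually_gt_atTop i.down).mono fun n hn => ?_)
    simp only [tailDiagonal_π, if_neg (not_le.2 hn)]
    exact map_zero _
  exact Germ.coe_eq.1 (DFunLike.congr_fun (congrArg AddCommGrpCat.Hom.hom hzero)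
    (AddCommGrpCat.ofHom φ : AddCommGrpCat.of (P ⟶ _) ⟶ A))

end

open CategoryTheory.Pretriangulated.Opposite in
theorem brownComenetz_dual_not_compact [HasProducts.{v} C]
    (P : C) (hP0 : ¬ IsZero P)
    (Phat : C) (hrep : Nonempty (BCfunctor C P ≅ preadditiveYoneda.obj Phat)) :
    ¬ (∀ (J : Type v), PreservesColimitsOfShape (Discrete J)
        (preadditiveYoneda.obj Phat : Cᵒᵖ ⥤ AddCommGrpCat.{v})) := by
  intro hPhat
  obtain ⟨e⟩ := hrep
  have : PreservesColimitsOfShape (Discrete (ULift.{v} ℕ))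
      ((preadditiveCoyoneda.obj (op P)).op ⋙
        preadditiveYoneda.obj (AddCommGrpCat.of (ULift.{v} (AddCircle (1 : ℚ))))) :=
    preservesColimitsOfShape_of_natIso e.symm
  obtain ⟨χ, hχ⟩ := exists_addCircle_hom_ne_zero_of_eventuallyEq_const (atTop : Filter ℕ)
    (mt (IsZero.iff_id_eq_zero P).2 hP0)
  let coords : (P ⟶ ∏ᶜ fun _ : ULift.{v} ℕ => P) →+ (ℕ → (P ⟶ P)) :=
    AddMonoidHom.pi fun n => Preadditive.rightComp P (Pi.π _ ⟨n⟩)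
  obtain ⟨n, hn⟩ := (eventually_apply_tailDiagonal_eq_zero P
    (AddCommGrpCat.of (ULift.{v} (AddCircle (1 : ℚ))))
    (AddEquiv.ulift.symm.toAddMonoidHom.comp (χ.comp coords))).exists
  exact hχ (coords (tailDiagonal P n))
    ((eventually_ge_atTop n).mono fun m hm => (tailDiagonal_π P n ⟨m⟩).trans (if_pos hm))
    (congrArg ULift.down hn)
end
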